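/- The trajectory likelihood defined via the chain of conditional transition probabilities, p(T) = ∏_{i=2}^{|T|} edgeWeight((v_{i-1}, v_i)) / (Σ_{e : e.p1 = v_{i-1}} edgeWeight(e)), defines a probability distribution on the set of s-to-d paths in a finite DAG: the likelihoods of all paths from s to d sum to 1, provided every vertex reachable from s has positive total outgoing weight or equals d. -/

import Mathlib

open Finset

variable {V : Type*} [Fintype V] [DecidableEq V]

/-- A simple directed path from `s` to `d`, given as its list of edges. -/
def IsSimplePath (s d : V) (T : List (V × V)) : Prop :=
  T ≠ [] ∧ List.Chain' (fun e f => e.2 = f.1) T ∧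
    (T.map Prod.fst).head? = some s ∧ (T.map Prod.snd).getLast? = some d ∧
    (s :: T.map Prod.snd).Nodup

/-- Total weight of positively weighted edges leaving `v`. -/
noncomputable def outSum (w : V × V → ℝ) (v : V) : ℝ :=
  ∑ e ∈ univ.filter (fun e : V × V => e.1 = v ∧ 0 < w e), w e

/-- Trajectory likelihood: product of conditional transition probabilities. -/
noncomputable def pathProb (w : V × V → ℝ) (T : List (V × V)) : ℝ :=
  (T.map (fun e => w e / outSum w e.1)).prod

/-! Sort the paths from `v` by their first edge `(v, u)`. What remains is a path from `u` (empty
when `u = d`), and acyclicity guarantees that prepending `(v, u)` to any path from `u` gives a simple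
path from `v`. So the total likelihood of the paths from `v` is `∑ u, w (v, u) / outSum w v` times
that of the paths from `u`, which is `1` by well-founded induction along the edges. -/

set_option linter.deprecated false in
omit [Fintype V] [DecidableEq V] in
lemma isSimplePath_cons_iff {v d a u : V} {T : List (V × V)} :
    IsSimplePath v d ((a, u) :: T) ↔
      a = v ∧ v ∉ u :: T.map Prod.snd ∧ (T = [] ∧ u = d ∨ IsSimplePath u d T) := by
  cases T with
  | nil => simp [IsSimplePath]; tauto
  | cons f T => simp [IsSimplePath, List.Chain', List.isChain_cons_cons]; tauto

omit [Fintype V] [DecidableEq V] in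
lemma not_isSimplePath_self (d : V) (T : List (V × V)) : ¬ IsSimplePath d d T :=
  fun ⟨_, _, _, hlast, hnd⟩ => (List.nodup_cons.mp hnd).1 (List.mem_of_getLast? hlast)

lemma outSum_eq_sum (w : V × V → ℝ) (v : V) :
    outSum w v = ∑ u ∈ univ.filter (fun u => 0 < w (v, u)), w (v, u) := by
  rw [outSum, Finset.sum_filter, Fintype.sum_prod_type,
    Fintype.sum_eq_single v fun x hx => by simp [hx], Finset.sum_filter]
  simp

lemma pathProb_cons (w : V × V → ℝ) (e : V × V) (T : List (V × V)) :
    pathProb w (e :: T) = w e / outSum w e.1 * pathProb w T := by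
  simp [pathProb]

lemma Finite.wellFounded_flip_of_acyclic {α : Type*} [Finite α] {r : α → α → Prop}
    (h : ∀ a, ¬ Relation.TransGen r a a) : WellFounded (flip r) := by
  have : IsTrans α (flip (Relation.TransGen r)) := ⟨fun _ _ _ hab hbc => hbc.trans hab⟩
  have : Std.Irrefl (flip (Relation.TransGen r)) := ⟨h⟩
  exact (Finite.wellFounded_of_trans_of_irrefl (flip (Relation.TransGen r))).mono
    fun _ _ h => Relation.TransGen.single h

section PosPaths

variable (w : V × V → ℝ)

omit [DecidableEq V] in
lemma finite_posPaths (v d : V) :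
    {T : List (V × V) | (T = [] ∧ v = d ∨ IsSimplePath v d T) ∧ ∀ f ∈ T, 0 < w f}.Finite := by
  refine (List.finite_length_le (V × V) (Fintype.card V)).subset ?_
  rintro T ⟨⟨rfl, -⟩ | ⟨-, -, -, -, hnd⟩, -⟩
  · simp
  · exact (by simpa using hnd.length_le_card : T.length < _).le

/-- Including the empty path when `v = d` makes the first-step decomposition
`posPaths_eq_biUnion` hold uniformly in the successor. -/
noncomputable def posPaths (v d : V) : Finset (List (V × V)) :=
  (finite_posPaths w v d).toFinset

variable {w}

omit [DecidableEq V] in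
lemma mem_posPaths {v d : V} {T : List (V × V)} :
    T ∈ posPaths w v d ↔ (T = [] ∧ v = d ∨ IsSimplePath v d T) ∧ ∀ f ∈ T, 0 < w f :=
  Set.Finite.mem_toFinset _

omit [DecidableEq V] in
lemma posPaths_self (d : V) : posPaths w d d = {[]} := by
  ext T
  simp only [mem_posPaths, not_isSimplePath_self, or_false, mem_singleton]
  exact ⟨fun h => h.1.1, by rintro rfl; simp⟩

omit [DecidableEq V] in
lemma cons_mem_posPaths {v d a u : V} {T : List (V × V)} :
    (a, u) :: T ∈ posPaths w v d ↔
      a = v ∧ v ∉ u :: T.map Prod.snd ∧ 0 < w (v, u) ∧ T ∈ posPaths w u d := by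
  simp only [mem_posPaths, isSimplePath_cons_iff, List.mem_cons, forall_eq_or_imp,
    reduceCtorEq, false_and, false_or]
  constructor
  · rintro ⟨⟨rfl, hv, hT⟩, hvu, hpos⟩
    exact ⟨rfl, hv, hvu, hT, hpos⟩
  · rintro ⟨rfl, hv, hvu, hT, hpos⟩
    exact ⟨⟨rfl, hv, hT⟩, hvu, hpos⟩

omit [DecidableEq V] in
lemma transGen_of_mem_posPaths {v d x : V} {T : List (V × V)} (hT : T ∈ posPaths w v d)
    (hx : x ∈ T.map Prod.snd) : Relation.TransGen (fun a b => 0 < w (a, b)) v x := by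
  induction T generalizing v with
  | nil => simp at hx
  | cons e T ih =>
    obtain ⟨rfl, -, hvu, hT⟩ := cons_mem_posPaths.mp hT
    rcases List.mem_cons.mp hx with rfl | hx
    · exact .single hvu
    · exact .head hvu (ih hT hx)

variable (hacyc : ∀ v : V, ¬ Relation.TransGen (fun a b => 0 < w (a, b)) v v)
include hacyc

lemma posPaths_eq_biUnion {v d : V} (hvd : v ≠ d) :
    posPaths w v d = (univ.filter fun u => 0 < w (v, u)).biUnion
      fun u => (posPaths w u d).image (List.cons (v, u)) := by
  ext T
  cases T with
  | nil => simp [mem_posPaths, hvd, IsSimplePath]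
  | cons e T =>
    obtain ⟨a, u⟩ := e
    simp only [cons_mem_posPaths, mem_biUnion, mem_filter, mem_univ, true_and, mem_image,
      List.cons.injEq, Prod.mk.injEq]
    constructor
    · rintro ⟨rfl, -, hvu, hT⟩
      exact ⟨u, hvu, T, hT, ⟨rfl, rfl⟩, rfl⟩
    · rintro ⟨u, hvu, T, hT, ⟨rfl, rfl⟩, rfl⟩
      refine ⟨rfl, ?_, hvu, hT⟩
      intro hv
      rcases List.mem_cons.mp hv with rfl | hv
      · exact hacyc v (.single hvu)
      · exact hacyc v (.head hvu (transGen_of_mem_posPaths hT hv))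

lemma sum_pathProb_posPaths (d : V) (v : V)
    (hout : ∀ x, x ≠ d → Relation.ReflTransGen (fun a b => 0 < w (a, b)) v x →
      0 < outSum w x) :
    ∑ T ∈ posPaths w v d, pathProb w T = 1 := by
  induction v using (Finite.wellFounded_flip_of_acyclic hacyc).induction with
  | _ v ih =>
  rcases eq_or_ne v d with rfl | hvd
  · simp [posPaths_self, pathProb]
  have hsucc : ∀ u ∈ univ.filter fun u => 0 < w (v, u),
      ∑ T ∈ posPaths w u d, pathProb w ((v, u) :: T) = w (v, u) / outSum w v := by
    intro u hu
    have hvu : 0 < w (v, u) := (mem_filter.mp hu).2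
    simp only [pathProb_cons, ← mul_sum]
    rw [ih u hvu fun x hx hux => hout x hx (.head hvu hux), mul_one]
  calc ∑ T ∈ posPaths w v d, pathProb w T
      = ∑ u ∈ univ.filter fun u => 0 < w (v, u),
          ∑ T ∈ posPaths w u d, pathProb w ((v, u) :: T) := by
        rw [posPaths_eq_biUnion hacyc hvd, sum_biUnion]
        · exact sum_congr rfl fun u _ => sum_image fun _ _ _ _ h => List.cons_injective h
        · intro u _ u' _ huu'
          simp only [Function.onFun, disjoint_left, mem_image]
          rintro _ ⟨T, -, rfl⟩ ⟨T', -, hTT'⟩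
          exact huu' (by simp_all)
    _ = ∑ u ∈ univ.filter fun u => 0 < w (v, u), w (v, u) / outSum w v := sum_congr rfl hsucc
    _ = 1 := by
        rw [← sum_div, ← outSum_eq_sum]
        exact div_self (hout v hvd .refl).ne'

end PosPaths

theorem stmt4_general (w : V × V → ℝ) (s d : V) (hsd : s ≠ d)
    (hacyc : ∀ v : V, ¬ Relation.TransGen (fun a b => 0 < w (a, b)) v v)
    (hout : ∀ v : V, v ≠ d → Relation.ReflTransGen (fun a b => 0 < w (a, b)) s v →
      0 < outSum w v) :
    ∑' T : {T : List (V × V) // IsSimplePath s d T ∧ ∀ f ∈ T, 0 < w f},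
      pathProb w T.1 = 1 := by
  have hpaths (T : List (V × V)) :
      T ∈ posPaths w s d ↔ IsSimplePath s d T ∧ ∀ f ∈ T, 0 < w f := by
    simp [mem_posPaths, hsd]
  rw [← (Equiv.subtypeEquivRight hpaths).tsum_eq]
  exact (Finset.tsum_subtype _ _).trans (sum_pathProb_posPaths hacyc d s hout)

/-- In a finite DAG with nonnegative weights, where every vertex ≠ d reachable
from s has positive outgoing weight and every positive edge lies on some s-d
path, the trajectory likelihoods of all s-d paths sum to 1. -/
theorem stmt4 (w : V × V → ℝ) (hw : ∀ e, 0 ≤ w e) (s d : V) (hsd : s ≠ d)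
    (hacyc : ∀ v : V, ¬ Relation.TransGen (fun a b => 0 < w (a, b)) v v)
    (hout : ∀ v : V, v ≠ d → Relation.ReflTransGen (fun a b => 0 < w (a, b)) s v →
      0 < outSum w v)
    (honpath : ∀ e : V × V, 0 < w e →
      ∃ T, IsSimplePath s d T ∧ e ∈ T ∧ ∀ f ∈ T, 0 < w f) :
    ∑' T : {T : List (V × V) // IsSimplePath s d T ∧ ∀ f ∈ T, 0 < w f},
      pathProb w T.1 = 1 :=
  stmt4_general w s d hsd hacyc hout
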